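/- Let P(λ) = λ(J₁+R₁) + (J₂+R₂) be an n×n complex posH pencil. If the pencil λR₁ + J₂ is regular, i.e., det(μR₁ + J₂) ≠ 0 for some μ ∈ ℂ, then P(λ) is regular, and if x ∈ ℂⁿ is a nonzero vector with (α(J₁+R₁) + (J₂+R₂))x = 0 for a real number α > 0, then (αJ₁ + J₂)x = 0. -/

import Mathlib

/-!
For real `t > 0`, `P(t) = (tJ₁ + J₂) + (tR₁ + R₂)` is skew-Hermitian plus positive
semidefinite. If `P(t)x = 0`, then `x*(tR₁ + R₂)x = -x*(tJ₁ + J₂)x` is both nonnegative and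
purely imaginary, hence zero, so `R₁x = R₂x = 0` and `(tJ₁ + J₂)x = 0`.

If `P` were singular, `det(tJ₁ + J₂ + R₁ + R₂)` would vanish for all `t > 0`, hence identically
as a polynomial in `t`, in particular at `t = 0`. A kernel vector of `J₂ + R₁ + R₂` is then
annihilated by `R₁` and `J₂`, so `λR₁ + J₂` is singular.
-/

open Matrix
open scoped ComplexOrder

namespace Matrix

variable {n : Type*} [Fintype n]

theorem det_eq_zero_of_infinite_setOf_det_smul_add_eq_zero [DecidableEq n] {R : Type*}
    [CommRing R] [IsDomain R] (A B : Matrix n n R)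
    (h : {t : R | (t • A + B).det = 0}.Infinite) : B.det = 0 := by
  open Polynomial in
  set p : R[X] := det ((X : R[X]) • A.map C + B.map C)
  have heval (t : R) : p.eval t = (t • A + B).det := by
    rw [← coe_evalRingHom, RingHom.map_det]
    congr 1
    ext i j
    simp only [coe_evalRingHom, RingHom.mapMatrix_apply, map_apply, add_apply, smul_apply,
      smul_eq_mul, eval_add, eval_mul, eval_X, eval_C]
  have hp : p = 0 := p.eq_zero_of_infinite_isRoot <| h.mono fun t ht ↦ by
    rwa [Set.mem_ofPred_eq, IsRoot, heval]
  rw [← coeff_det_X_add_C_zero A B]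
  simp [p, hp]

section RCLike

variable {𝕜 : Type*} [RCLike 𝕜]

theorem re_star_dotProduct_mulVec_eq_zero {K : Matrix n n 𝕜} (hK : Kᴴ = -K) (x : n → 𝕜) :
    RCLike.re (star x ⬝ᵥ K *ᵥ x) = 0 := by
  have hconj : star (star x ⬝ᵥ K *ᵥ x) = -(star x ⬝ᵥ K *ᵥ x) := by
    have : star (star x ⬝ᵥ K *ᵥ x) = star x ⬝ᵥ Kᴴ *ᵥ x := by
      rw [star_dotProduct, star_star, star_mulVec, dotProduct_mulVec]
    rw [this, hK, neg_mulVec, dotProduct_neg]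
  have := congrArg RCLike.re hconj
  rw [RCLike.star_def, RCLike.conj_re, map_neg] at this
  linarith

theorem PosSemidef.mulVec_eq_zero_of_skew_add_mulVec_eq_zero {K A : Matrix n n 𝕜}
    (hK : Kᴴ = -K) (hA : A.PosSemidef) {x : n → 𝕜} (h : (K + A) *ᵥ x = 0) : A *ᵥ x = 0 := by
  have hAK : star x ⬝ᵥ A *ᵥ x = -(star x ⬝ᵥ K *ᵥ x) := by
    rw [eq_neg_iff_add_eq_zero, add_comm, ← dotProduct_add, ← add_mulVec, h, dotProduct_zero]
  obtain ⟨-, him⟩ := RCLike.nonneg_iff.mp (hA.dotProduct_mulVec_nonneg x)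
  have hre : RCLike.re (star x ⬝ᵥ A *ᵥ x) = 0 := by
    rw [hAK, map_neg, re_star_dotProduct_mulVec_eq_zero hK, neg_zero]
  exact (hA.dotProduct_mulVec_zero_iff x).mp (RCLike.ext (by simpa using hre) (by simpa using him))

theorem PosSemidef.mulVec_eq_zero_of_add_mulVec_eq_zero {A B : Matrix n n 𝕜}
    (hA : A.PosSemidef) (hB : B.PosSemidef) {x : n → 𝕜} (h : (A + B) *ᵥ x = 0) :
    A *ᵥ x = 0 := by
  have hsum : star x ⬝ᵥ A *ᵥ x + star x ⬝ᵥ B *ᵥ x = 0 := by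
    rw [← dotProduct_add, ← add_mulVec, h, dotProduct_zero]
  exact (hA.dotProduct_mulVec_zero_iff x).mp <| ((add_eq_zero_iff_of_nonneg
    (hA.dotProduct_mulVec_nonneg x) (hB.dotProduct_mulVec_nonneg x)).mp hsum).1

theorem mulVec_eq_zero_of_skew_add_posSemidef_add_mulVec_eq_zero {K A B : Matrix n n 𝕜}
    (hK : Kᴴ = -K) (hA : A.PosSemidef) (hB : B.PosSemidef) {x : n → 𝕜}
    (h : (K + (A + B)) *ᵥ x = 0) : A *ᵥ x = 0 ∧ B *ᵥ x = 0 ∧ K *ᵥ x = 0 := by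
  have hABx := (hA.add hB).mulVec_eq_zero_of_skew_add_mulVec_eq_zero hK h
  have hAx := hA.mulVec_eq_zero_of_add_mulVec_eq_zero hB hABx
  have hBx := hB.mulVec_eq_zero_of_add_mulVec_eq_zero hA (add_comm A B ▸ hABx)
  refine ⟨hAx, hBx, ?_⟩
  simpa [add_mulVec, hAx, hBx] using h

end RCLike

end Matrix

section PosHPencil

variable {n : Type*} [Fintype n] {J₁ J₂ R₁ R₂ : Matrix n n ℂ}

theorem mulVec_eq_zero_of_posH_pencil_mulVec_eq_zero (hJ₁ : J₁ᴴ = -J₁) (hJ₂ : J₂ᴴ = -J₂)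
    (hR₁ : R₁.PosSemidef) (hR₂ : R₂.PosSemidef) {t : ℝ} (ht : 0 < t) {x : n → ℂ}
    (h : ((t : ℂ) • (J₁ + R₁) + (J₂ + R₂)) *ᵥ x = 0) :
    R₁ *ᵥ x = 0 ∧ R₂ *ᵥ x = 0 ∧ ((t : ℂ) • J₁ + J₂) *ᵥ x = 0 := by
  have hK : ((t : ℂ) • J₁ + J₂)ᴴ = -((t : ℂ) • J₁ + J₂) := by
    rw [conjTranspose_add, conjTranspose_smul, hJ₁, hJ₂, Complex.star_def, Complex.conj_ofReal,
      smul_neg, neg_add]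
  have htR₁ : ((t : ℂ) • R₁).PosSemidef := hR₁.smul (by exact_mod_cast ht.le)
  rw [smul_add, add_add_add_comm] at h
  obtain ⟨htR₁x, hR₂x, hKx⟩ :=
    mulVec_eq_zero_of_skew_add_posSemidef_add_mulVec_eq_zero hK htR₁ hR₂ h
  rw [smul_mulVec, smul_eq_zero] at htR₁x
  exact ⟨htR₁x.resolve_left (by exact_mod_cast ht.ne'), hR₂x, hKx⟩

theorem det_smul_add_eq_zero_of_posH_pencil_det_eq_zero [DecidableEq n] (hJ₁ : J₁ᴴ = -J₁)
    (hJ₂ : J₂ᴴ = -J₂) (hR₁ : R₁.PosSemidef) (hR₂ : R₂.PosSemidef) {t : ℝ} (ht : 0 < t)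
    (h : ((t : ℂ) • (J₁ + R₁) + (J₂ + R₂)).det = 0) :
    ((t : ℂ) • J₁ + (J₂ + (R₁ + R₂))).det = 0 := by
  obtain ⟨x, hx0, hx⟩ := exists_mulVec_eq_zero_iff.mpr h
  obtain ⟨hR₁x, hR₂x, hKx⟩ := mulVec_eq_zero_of_posH_pencil_mulVec_eq_zero hJ₁ hJ₂ hR₁ hR₂ ht hx
  refine exists_mulVec_eq_zero_iff.mp ⟨x, hx0, ?_⟩
  rw [← add_assoc, add_mulVec _ _ x, hKx, add_mulVec, hR₁x, hR₂x, add_zero, add_zero]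

end PosHPencil

/-- Corollary 3.8(iv): if the pencil `λR₁ + J₂` is regular, then the posH pencil
`P(λ) = λ(J₁+R₁) + (J₂+R₂)` is regular, and any eigenvector `x` associated with a
real positive eigenvalue `α` of `P(λ)` satisfies `(αJ₁ + J₂)x = 0`. -/
theorem posH_regular_of_mixed_pencil_regular {n : ℕ}
    (J₁ J₂ R₁ R₂ : Matrix (Fin n) (Fin n) ℂ)
    (hJ₁ : J₁ᴴ = -J₁) (hJ₂ : J₂ᴴ = -J₂)
    (hR₁ : R₁.PosSemidef) (hR₂ : R₂.PosSemidef)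
    (hreg : ∃ μ : ℂ, (μ • R₁ + J₂).det ≠ 0) :
    (∃ μ : ℂ, (μ • (J₁ + R₁) + (J₂ + R₂)).det ≠ 0) ∧
    (∀ (α : ℝ) (x : Fin n → ℂ), 0 < α → x ≠ 0 →
      ((α : ℂ) • (J₁ + R₁) + (J₂ + R₂)) *ᵥ x = 0 →
      ((α : ℂ) • J₁ + J₂) *ᵥ x = 0) := by
  refine ⟨?_, fun α x hα _ hx ↦
    (mulVec_eq_zero_of_posH_pencil_mulVec_eq_zero hJ₁ hJ₂ hR₁ hR₂ hα hx).2.2⟩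
  obtain ⟨μ, hμ⟩ := hreg
  by_contra! hsing
  have hpos : Complex.ofReal '' Set.Ioi 0 ⊆ {t : ℂ | (t • J₁ + (J₂ + (R₁ + R₂))).det = 0} := by
    rintro _ ⟨t, ht, rfl⟩
    exact det_smul_add_eq_zero_of_posH_pencil_det_eq_zero hJ₁ hJ₂ hR₁ hR₂ ht (hsing t)
  have hC : (J₂ + (R₁ + R₂)).det = 0 :=
    det_eq_zero_of_infinite_setOf_det_smul_add_eq_zero J₁ _ <|
      ((Set.Ioi_infinite 0).image Complex.ofReal_injective.injOn).mono hpos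
  obtain ⟨x, hx0, hx⟩ := exists_mulVec_eq_zero_iff.mpr hC
  obtain ⟨hR₁x, -, hJ₂x⟩ := mulVec_eq_zero_of_skew_add_posSemidef_add_mulVec_eq_zero hJ₂ hR₁ hR₂ hx
  refine hμ (exists_mulVec_eq_zero_iff.mp ⟨x, hx0, ?_⟩)
  rw [add_mulVec, smul_mulVec, hR₁x, hJ₂x, smul_zero, add_zero]
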